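/- Let 𝒯 = {T_i} be a finite collection of dyadic squares achieving the minimum of Σ_i ℓ(R_i)^t over all admissible coverings of a compact set E (admissible: finite collections of dyadic squares meeting E, with side lengths in [2^{-M}, 1], covering E, with pairwise disjoint interiors). Then for every dyadic square Q with 2^{-M} ≤ ℓ(Q) ≤ 1, one has Σ_{T_i ⊆ Q} ℓ(T_i)^t ≤ ℓ(Q)^t. -/
import Mathlib


open MeasureTheory Set
open scoped Classical

/-- The closed dyadic square `[2^{-k}m₁, 2^{-k}(m₁+1)] × [2^{-k}m₂, 2^{-k}(m₂+1)]`,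
indexed by `q = (k, m₁, m₂)`. -/
def dSq (q : ℤ × ℤ × ℤ) : Set (ℝ × ℝ) :=
  Icc ((2 : ℝ) ^ (-q.1) * q.2.1) ((2 : ℝ) ^ (-q.1) * (q.2.1 + 1)) ×ˢ
    Icc ((2 : ℝ) ^ (-q.1) * q.2.2) ((2 : ℝ) ^ (-q.1) * (q.2.2 + 1))

/-- A finite collection of dyadic squares is admissible for `E` (at scales
between `2^{-M}` and `1`) if each member meets `E`, has side length in
`[2^{-M}, 1]`, the collection covers `E`, and the interiors are pairwise
disjoint. -/
def Admissible (E : Set (ℝ × ℝ)) (M : ℕ) (A : Finset (ℤ × ℤ × ℤ)) : Prop :=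
  (∀ q ∈ A, (dSq q ∩ E).Nonempty ∧ 0 ≤ q.1 ∧ q.1 ≤ (M : ℤ)) ∧
  (E ⊆ ⋃ q ∈ A, dSq q) ∧
  ((A : Set (ℤ × ℤ × ℤ)).Pairwise fun q q' => Disjoint (interior (dSq q)) (interior (dSq q')))

lemma two_zpow_pos' (k : ℤ) : (0:ℝ) < (2:ℝ)^k := zpow_pos (by norm_num) k

lemma dIcc_lemma (k k' m m' : ℤ) (hk : k ≤ k')
    (h : ¬ Disjoint (Ioo ((2:ℝ)^(-k)*m) ((2:ℝ)^(-k)*(m+1)))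
        (Ioo ((2:ℝ)^(-k')*m') ((2:ℝ)^(-k')*(m'+1)))) :
    Icc ((2:ℝ)^(-k')*m') ((2:ℝ)^(-k')*(m'+1)) ⊆
      Icc ((2:ℝ)^(-k)*m) ((2:ℝ)^(-k)*(m+1)) := by
  rw [Set.not_disjoint_iff] at h
  obtain ⟨x, hx1, hx2⟩ := h
  set n : ℤ := 2 ^ (k'-k).toNat with hn
  have hnum : (2:ℝ)^(-k) = (2:ℝ)^(-k') * (n:ℝ) := by
    rw [hn]
    push_cast
    rw [← zpow_natCast (2:ℝ) (k'-k).toNat, Int.toNat_of_nonneg (by omega),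
      ← zpow_add₀ (by norm_num : (2:ℝ) ≠ 0)]
    ring_nf
  have hp' : (0:ℝ) < (2:ℝ)^(-k') := two_zpow_pos' _
  have h1 : n * m ≤ m' := by
    have hlt : (2:ℝ)^(-k') * ((n:ℝ)*m) < (2:ℝ)^(-k') * (m'+1) := by
      have : (2:ℝ)^(-k) * m < (2:ℝ)^(-k') * (m'+1) := lt_trans hx1.1 hx2.2
      calc (2:ℝ)^(-k') * ((n:ℝ)*m) = (2:ℝ)^(-k) * m := by rw [hnum]; ring
        _ < _ := this
    have := (mul_lt_mul_iff_right₀ hp').mp hlt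
    have : (n*m : ℤ) < m' + 1 := by exact_mod_cast this
    omega
  have h2 : m' + 1 ≤ n * (m+1) := by
    have hlt : (2:ℝ)^(-k') * (m':ℝ) < (2:ℝ)^(-k') * ((n:ℝ)*(m+1)) := by
      have h0 : (2:ℝ)^(-k') * (m':ℝ) < (2:ℝ)^(-k) * (m+1) := lt_trans hx2.1 hx1.2
      calc (2:ℝ)^(-k') * (m':ℝ) < (2:ℝ)^(-k) * (m+1) := h0
        _ = (2:ℝ)^(-k') * ((n:ℝ)*(m+1)) := by rw [hnum]; ring
    have := (mul_lt_mul_iff_right₀ hp').mp hlt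
    have : (m' : ℤ) < n * (m+1) := by exact_mod_cast this
    omega
  apply Icc_subset_Icc
  · calc (2:ℝ)^(-k) * m = (2:ℝ)^(-k') * ((n:ℝ)*m) := by rw [hnum]; ring
      _ ≤ (2:ℝ)^(-k') * m' :=
        mul_le_mul_of_nonneg_left (by exact_mod_cast h1) hp'.le
  · calc (2:ℝ)^(-k') * ((m':ℝ)+1) ≤ (2:ℝ)^(-k') * ((n:ℝ)*(m+1)) :=
        mul_le_mul_of_nonneg_left (by exact_mod_cast h2) hp'.le
      _ = (2:ℝ)^(-k) * (m+1) := by rw [hnum]; ring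

lemma dSq_interior (q : ℤ × ℤ × ℤ) :
    interior (dSq q) =
      Ioo ((2:ℝ)^(-q.1)*q.2.1) ((2:ℝ)^(-q.1)*(q.2.1+1)) ×ˢ
        Ioo ((2:ℝ)^(-q.1)*q.2.2) ((2:ℝ)^(-q.1)*(q.2.2+1)) := by
  rw [dSq, interior_prod_eq, interior_Icc, interior_Icc]

lemma dSq_interior_nonempty (q : ℤ × ℤ × ℤ) : (interior (dSq q)).Nonempty := by
  rw [dSq_interior]
  have h : ∀ m : ℤ, (2:ℝ)^(-q.1)*m < (2:ℝ)^(-q.1)*(m+1) := fun m =>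
    mul_lt_mul_of_pos_left (by push_cast; linarith) (two_zpow_pos' _)
  exact (nonempty_Ioo.mpr (h _)).prod (nonempty_Ioo.mpr (h _))

lemma dSq_subset_or (q Q : ℤ × ℤ × ℤ)
    (h : ¬ Disjoint (interior (dSq q)) (interior (dSq Q))) :
    dSq q ⊆ dSq Q ∨ dSq Q ⊆ dSq q := by
  rw [Set.not_disjoint_iff] at h
  obtain ⟨p, hp1, hp2⟩ := h
  rw [dSq_interior] at hp1 hp2
  rcases le_total Q.1 q.1 with hk | hk
  · left
    exact Set.prod_mono
      (dIcc_lemma Q.1 q.1 Q.2.1 q.2.1 hk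
        (Set.not_disjoint_iff.mpr ⟨p.1, hp2.1, hp1.1⟩))
      (dIcc_lemma Q.1 q.1 Q.2.2 q.2.2 hk
        (Set.not_disjoint_iff.mpr ⟨p.2, hp2.2, hp1.2⟩))
  · right
    exact Set.prod_mono
      (dIcc_lemma q.1 Q.1 q.2.1 Q.2.1 hk
        (Set.not_disjoint_iff.mpr ⟨p.1, hp1.1, hp2.1⟩))
      (dIcc_lemma q.1 Q.1 q.2.2 Q.2.2 hk
        (Set.not_disjoint_iff.mpr ⟨p.2, hp1.2, hp2.2⟩))


/-- **Local packing property of minimizers.** If `𝒯` minimizes `Σ ℓ(T)^t` among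
admissible coverings of a compact set `E ⊆ (0,1)²`, then for every dyadic
square `Q` with `2^{-M} ≤ ℓ(Q) ≤ 1` one has `Σ_{T ⊆ Q} ℓ(T)^t ≤ ℓ(Q)^t`. -/
theorem minimizer_local_packing (E : Set (ℝ × ℝ)) (hE : IsCompact E)
    (hE' : E ⊆ Ioo (0:ℝ) 1 ×ˢ Ioo (0:ℝ) 1)
    (t : ℝ) (ht0 : 0 < t) (ht2 : t < 2) (M : ℕ) (hM : 0 < M)
    (𝒯 : Finset (ℤ × ℤ × ℤ)) (h𝒯 : Admissible E M 𝒯)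
    (hmin : ∀ A : Finset (ℤ × ℤ × ℤ), Admissible E M A →
      (∑ q ∈ 𝒯, ((2 : ℝ) ^ (-q.1) : ℝ) ^ t) ≤ ∑ q ∈ A, ((2 : ℝ) ^ (-q.1) : ℝ) ^ t) :
    ∀ Q : ℤ × ℤ × ℤ, 0 ≤ Q.1 → Q.1 ≤ (M : ℤ) →
      (∑ q ∈ 𝒯, if dSq q ⊆ dSq Q then ((2 : ℝ) ^ (-q.1) : ℝ) ^ t else 0)
        ≤ ((2 : ℝ) ^ (-Q.1) : ℝ) ^ t := by
  intro Q hQ0 hQM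
  set f : ℤ × ℤ × ℤ → ℝ := fun q => ((2 : ℝ) ^ (-q.1) : ℝ) ^ t with hf
  set S : Finset (ℤ × ℤ × ℤ) := 𝒯.filter (fun q => dSq q ⊆ dSq Q) with hSdef
  have hLHS : (∑ q ∈ 𝒯, if dSq q ⊆ dSq Q then f q else 0) = ∑ q ∈ S, f q :=
    (Finset.sum_filter _ _).symm
  have hRHSpos : (0:ℝ) ≤ f Q := Real.rpow_nonneg (two_zpow_pos' _).le t
  rw [hLHS]
  rcases S.eq_empty_or_nonempty with hSe | ⟨q0, hq0⟩
  · rw [hSe, Finset.sum_empty]; exact hRHSpos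
  · have hq0T : q0 ∈ 𝒯 := (Finset.mem_filter.mp hq0).1
    have hq0Q : dSq q0 ⊆ dSq Q := (Finset.mem_filter.mp hq0).2
    have hdisj : ∀ T ∈ 𝒯, T ∉ S →
        Disjoint (interior (dSq T)) (interior (dSq Q)) := by
      intro T hT hTS
      by_contra hcon
      rcases dSq_subset_or T Q hcon with h1 | h1
      · exact hTS (Finset.mem_filter.mpr ⟨hT, h1⟩)
      · have hne : q0 ≠ T := fun e => hTS (e ▸ hq0)
        have hpd := h𝒯.2.2 (Finset.mem_coe.mpr hq0T) (Finset.mem_coe.mpr hT) hne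
        have hsub : interior (dSq q0) ⊆ interior (dSq T) :=
          interior_mono (hq0Q.trans h1)
        have := hpd.eq_bot_of_le hsub
        exact (dSq_interior_nonempty q0).ne_empty this
    set A : Finset (ℤ × ℤ × ℤ) := insert Q (𝒯 \ S) with hAdef
    have hQnot : Q ∉ 𝒯 \ S := by
      intro h
      obtain ⟨h1, h2⟩ := Finset.mem_sdiff.mp h
      exact h2 (Finset.mem_filter.mpr ⟨h1, subset_rfl⟩)
    have hAdm : Admissible E M A := by
      refine ⟨?_, ?_, ?_⟩
      · intro q hq
        rcases Finset.mem_insert.mp hq with rfl | hq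
        · refine ⟨?_, hQ0, hQM⟩
          obtain ⟨x, hx1, hx2⟩ := (h𝒯.1 q0 hq0T).1
          exact ⟨x, hq0Q hx1, hx2⟩
        · exact h𝒯.1 q (Finset.mem_sdiff.mp hq).1
      · intro x hx
        have := h𝒯.2.1 hx
        simp only [Set.mem_iUnion] at this ⊢
        obtain ⟨q, hq, hxq⟩ := this
        by_cases hqS : q ∈ S
        · exact ⟨Q, Finset.mem_insert_self _ _, (Finset.mem_filter.mp hqS).2 hxq⟩
        · exact ⟨q, Finset.mem_insert_of_mem (Finset.mem_sdiff.mpr ⟨hq, hqS⟩), hxq⟩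
      · intro a ha b hb hab
        simp only [hAdef, Finset.coe_insert, Set.mem_insert_iff, Finset.mem_coe,
          Finset.mem_sdiff] at ha hb
        rcases ha with rfl | ⟨ha1, ha2⟩ <;> rcases hb with rfl | ⟨hb1, hb2⟩
        · exact absurd rfl hab
        · exact (hdisj b hb1 hb2).symm
        · exact hdisj a ha1 ha2
        · exact h𝒯.2.2 (Finset.mem_coe.mpr ha1) (Finset.mem_coe.mpr hb1) hab
    have hm := hmin A hAdm
    rw [hAdef, Finset.sum_insert hQnot] at hm
    have hsplit : ∑ q ∈ 𝒯 \ S, f q + ∑ q ∈ S, f q = ∑ q ∈ 𝒯, f q :=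
      Finset.sum_sdiff (Finset.filter_subset _ _)
    linarith
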